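/- Let ε > 0, δ > 0, σ ≥ 0, g ∈ ℓ², and let u : [0, ∞) → ℓ² be a continuously differentiable solution of the dissipative DNLS equation i u̇_n + (1/ε)(u_{n−1} − 2u_n + u_{n+1}) + iδ u_n + |u_n|^{2σ}u_n = g_n (n ∈ ℤ) with u(0) = u₀. Then for all t ≥ 0, ‖u(t)‖²_{ℓ²} ≤ ‖u₀‖²_{ℓ²} e^{−δt} + (1/δ²)‖g‖²_{ℓ²}(1 − e^{−δt}); in particular limsup_{t→∞} ‖u(t)‖²_{ℓ²} ≤ ‖g‖²_{ℓ²}/δ², so any ball of radius ρ₁ > ‖g‖_{ℓ²}/δ centered at 0 is an absorbing set. -/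

import Mathlib

/-!
Pair the equation with `u` in `ℓ²`. The discrete Laplacian is self-adjoint and the nonlinearity
is sitewise a real multiple of `u`, so both contribute real numbers to `⟪u, ·⟫`; taking imaginary
parts leaves `d/dt ‖u‖² = 2 Im ⟪u, g⟫ - 2δ ‖u‖² ≤ -δ ‖u‖² + ‖g‖² / δ` by Cauchy–Schwarz and Young.
Grönwall's inequality integrates this to the exponential estimate, whose right-hand side tends
to `‖g‖² / δ²`.
-/

open scoped ENNReal ComplexConjugate InnerProductSpace

theorem Memℓp.comp_equiv {α β E : Type*} [NormedAddCommGroup E] {p : ℝ≥0∞} {f : β → E}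
    (hf : Memℓp f p) (e : α ≃ β) : Memℓp (f ∘ e) p := by
  rcases p.trichotomy with rfl | rfl | hp
  · rw [memℓp_zero_iff] at hf ⊢
    exact hf.preimage e.injective.injOn
  · rw [memℓp_infty_iff] at hf ⊢
    convert hf using 1
    exact e.surjective.range_comp fun b => ‖f b‖
  · rw [memℓp_gen_iff hp] at hf ⊢
    exact e.summable_iff.2 hf

namespace lp

variable {E : Type*} [NormedAddCommGroup E] {p : ℝ≥0∞}

def shift (k : ℤ) (v : lp (fun _ : ℤ => E) p) : lp (fun _ : ℤ => E) p :=
  ⟨fun n => v (n + k), (lp.memℓp v).comp_equiv (Equiv.addRight k)⟩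

@[simp] theorem shift_apply (k : ℤ) (v : lp (fun _ : ℤ => E) p) (n : ℤ) :
    shift k v n = v (n + k) := rfl

noncomputable def discreteLaplacian (v : lp (fun _ : ℤ => E) p) : lp (fun _ : ℤ => E) p :=
  shift (-1) v - 2 • v + shift 1 v

@[simp] theorem discreteLaplacian_apply (v : lp (fun _ : ℤ => E) p) (n : ℤ) :
    discreteLaplacian v n = v (n - 1) - 2 • v n + v (n + 1) := by
  simp [discreteLaplacian, sub_eq_add_neg]

variable {𝕜 F : Type*} [RCLike 𝕜] [NormedAddCommGroup F] [InnerProductSpace 𝕜 F]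

theorem inner_shift_left (k : ℤ) (v w : lp (fun _ : ℤ => F) 2) :
    ⟪shift k v, w⟫_𝕜 = ⟪v, shift (-k) w⟫_𝕜 := by
  rw [inner_eq_tsum, inner_eq_tsum, ← (Equiv.addRight (-k)).tsum_eq]
  simp

theorem inner_discreteLaplacian_left (v w : lp (fun _ : ℤ => F) 2) :
    ⟪discreteLaplacian v, w⟫_𝕜 = ⟪v, discreteLaplacian w⟫_𝕜 := by
  simp only [discreteLaplacian, two_smul, inner_add_left, inner_sub_left, inner_add_right,
    inner_sub_right, inner_shift_left, neg_neg]
  ring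

theorem im_inner_discreteLaplacian_self (v : lp (fun _ : ℤ => F) 2) :
    RCLike.im ⟪v, discreteLaplacian v⟫_𝕜 = 0 := by
  rw [← RCLike.conj_eq_iff_im, inner_conj_symm, inner_discreteLaplacian_left]

theorem im_inner_eq_zero_of_apply_eq_ofReal_mul {ι : Type*} {v w : lp (fun _ : ι => 𝕜) 2}
    (r : ι → ℝ) (h : ∀ i, w i = r i * v i) : RCLike.im ⟪v, w⟫_𝕜 = 0 := by
  rw [← RCLike.conj_eq_iff_im, inner_conj_symm, inner_eq_tsum, inner_eq_tsum]
  congr 1 with i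
  simp only [h, RCLike.inner_apply, map_mul, RCLike.conj_ofReal]
  ring

end lp

open Complex in
theorem re_inner_eq_of_dnls {ε δ : ℝ} {r : ℤ → ℝ} {v v' g : lp (fun _ : ℤ => ℂ) 2}
    (h : ∀ n, I * v' n + (1/ε : ℂ) * (v (n-1) - 2 * v n + v (n+1)) + I * δ * v n
      + (r n : ℂ) * v n = g n) :
    (⟪v, v'⟫_ℂ).re = (⟪v, g⟫_ℂ).im - δ * ‖v‖ ^ 2 := by
  -- the nonlinear term, written through the other terms of the equation, hence in `ℓ²`
  set w := g - I • v' - (1/ε : ℂ) • lp.discreteLaplacian v - (I * δ) • v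
  have hw : ∀ n, w n = r n * v n := fun n => by
    simp only [w, lp.coeFn_sub, lp.coeFn_smul, Pi.sub_apply, Pi.smul_apply, smul_eq_mul,
      lp.discreteLaplacian_apply, nsmul_eq_mul, Nat.cast_ofNat]
    linear_combination -h n
  have hg : g = I • v' + (1/ε : ℂ) • lp.discreteLaplacian v + (I * δ) • v + w := by
    simp only [w]; abel
  have hΔ : (⟪v, lp.discreteLaplacian v⟫_ℂ).im = 0 := lp.im_inner_discreteLaplacian_self (𝕜 := ℂ) v
  have hN : (⟪v, w⟫_ℂ).im = 0 := lp.im_inner_eq_zero_of_apply_eq_ofReal_mul r hw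
  rw [hg, inner_add_right, inner_add_right, inner_add_right, inner_smul_right, inner_smul_right,
    inner_smul_right, inner_self_eq_norm_sq_to_K]
  simp [hΔ, hN, ← ofReal_pow]

open Real Set Filter Topology

theorem le_exp_decay_of_hasDerivAt {f f' : ℝ → ℝ} {δ C : ℝ} (hδ : δ ≠ 0)
    (hf : ∀ t ∈ Ici (0:ℝ), HasDerivAt f (f' t) t)
    (bound : ∀ t ∈ Ici (0:ℝ), f' t ≤ -δ * f t + C) :
    ∀ t ∈ Ici (0:ℝ), f t ≤ f 0 * exp (-δ * t) + C / δ * (1 - exp (-δ * t)) := by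
  intro t ht
  have h := le_gronwallBound_of_liminf_deriv_right_le (δ := f 0) (b := t)
    (fun x hx => (hf x hx.1).continuousAt.continuousWithinAt)
    (fun x hx _ hr => (hf x hx.1).hasDerivWithinAt.liminf_right_slope_le hr)
    le_rfl (fun x hx => bound x hx.1) t ⟨ht, le_rfl⟩
  rw [sub_zero, gronwallBound_of_K_ne_0 (neg_ne_zero.2 hδ)] at h
  convert h using 2
  field_simp
  ring

theorem limsup_le_of_le_exp_decay {f : ℝ → ℝ} {A B δ : ℝ} (hδ : 0 < δ)
    (hf_bdd : IsBoundedUnder (· ≥ ·) atTop f)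
    (hf : ∀ t ∈ Ici (0:ℝ), f t ≤ A * exp (-δ * t) + B * (1 - exp (-δ * t))) :
    limsup f atTop ≤ B := by
  have hexp : Tendsto (fun t => exp (-δ * t)) atTop (𝓝 0) :=
    tendsto_exp_atBot.comp (tendsto_id.const_mul_atTop_of_neg (neg_neg_of_pos hδ))
  have hlim : Tendsto (fun t => A * exp (-δ * t) + B * (1 - exp (-δ * t))) atTop (𝓝 B) := by
    simpa using (hexp.const_mul A).add ((hexp.const_sub 1).const_mul B)
  calc limsup f atTop
      ≤ limsup (fun t => A * exp (-δ * t) + B * (1 - exp (-δ * t))) atTop :=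
        limsup_le_limsup (eventually_ge_atTop 0 |>.mono hf) hf_bdd.isCoboundedUnder_le
          hlim.isBoundedUnder_le
    _ = B := hlim.limsup_eq

theorem stmt_14_general (ε δ σ : ℝ) (hδ : 0 < δ)
    (g : lp (fun _ : ℤ => ℂ) 2)
    (u u' : ℝ → lp (fun _ : ℤ => ℂ) 2)
    (hu : ∀ t ∈ Set.Ici (0:ℝ), HasDerivAt u (u' t) t)
    (heq : ∀ t ∈ Set.Ici (0:ℝ), ∀ n : ℤ,
      Complex.I * u' t n + (1/ε : ℂ) * (u t (n-1) - 2 * u t n + u t (n+1))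
        + Complex.I * δ * u t n + (‖u t n‖ ^ (2 * σ) : ℝ) * u t n = g n)
    (u₀ : lp (fun _ : ℤ => ℂ) 2) (hu0 : u 0 = u₀) :
    (∀ t ∈ Set.Ici (0:ℝ),
      ‖u t‖^2 ≤ ‖u₀‖^2 * Real.exp (-δ * t)
        + (1/δ^2) * ‖g‖^2 * (1 - Real.exp (-δ * t))) ∧
    Filter.limsup (fun t => ‖u t‖^2) Filter.atTop ≤ ‖g‖^2 / δ^2 := by
  have hderiv : ∀ t ∈ Ici (0:ℝ), HasDerivAt (‖u ·‖ ^ 2) (2 * (⟪u t, u' t⟫_ℂ).re) t :=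
    fun t ht => by
      convert (hu t ht).norm_sq using 2
      rw [real_inner_eq_norm_add_mul_self_sub_norm_mul_self_sub_norm_mul_self_div_two,
        ← re_inner_eq_norm_add_mul_self_sub_norm_mul_self_sub_norm_mul_self_div_two (𝕜 := ℂ)]
      rfl
  have hbound : ∀ t ∈ Ici (0:ℝ), 2 * (⟪u t, u' t⟫_ℂ).re ≤ -δ * ‖u t‖ ^ 2 + ‖g‖ ^ 2 / δ := by
    intro t ht
    rw [re_inner_eq_of_dnls (heq t ht)]
    have hcs : (⟪u t, g⟫_ℂ).im ≤ ‖u t‖ * ‖g‖ :=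
      (Complex.im_le_norm _).trans (norm_inner_le_norm _ _)
    have hamgm := two_mul_le_add_mul_sq (a := ‖u t‖) (b := ‖g‖) hδ
    rw [div_eq_inv_mul]
    linarith
  have hdecay : ∀ t ∈ Ici (0:ℝ), ‖u t‖ ^ 2 ≤ ‖u₀‖ ^ 2 * exp (-δ * t)
      + (1/δ^2) * ‖g‖ ^ 2 * (1 - exp (-δ * t)) := by
    intro t ht
    convert le_exp_decay_of_hasDerivAt hδ.ne' hderiv hbound t ht using 3
    · rw [hu0]
    · ring
  exact ⟨hdecay, (limsup_le_of_le_exp_decay hδ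
    (isBoundedUnder_of_eventually_ge (.of_forall fun t => sq_nonneg ‖u t‖)) hdecay).trans_eq
    (by ring)⟩

/-- Absorbing-ball estimate for the dissipative DNLS:
`‖u(t)‖² ≤ ‖u₀‖² e^(−δt) + (1/δ²)‖g‖²(1 − e^(−δt))`, and in particular
`limsup_{t→∞} ‖u(t)‖² ≤ ‖g‖²/δ²`. -/
theorem stmt_14 (ε δ σ : ℝ) (hε : 0 < ε) (hδ : 0 < δ) (hσ : 0 ≤ σ)
    (g : lp (fun _ : ℤ => ℂ) 2)
    (u u' : ℝ → lp (fun _ : ℤ => ℂ) 2)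
    (hu : ∀ t ∈ Set.Ici (0:ℝ), HasDerivAt u (u' t) t)
    (hu' : ContinuousOn u' (Set.Ici (0:ℝ)))
    (heq : ∀ t ∈ Set.Ici (0:ℝ), ∀ n : ℤ,
      Complex.I * u' t n + (1/ε : ℂ) * (u t (n-1) - 2 * u t n + u t (n+1))
        + Complex.I * δ * u t n + (‖u t n‖ ^ (2 * σ) : ℝ) * u t n = g n)
    (u₀ : lp (fun _ : ℤ => ℂ) 2) (hu0 : u 0 = u₀) :
    (∀ t ∈ Set.Ici (0:ℝ),
      ‖u t‖^2 ≤ ‖u₀‖^2 * Real.exp (-δ * t)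
        + (1/δ^2) * ‖g‖^2 * (1 - Real.exp (-δ * t))) ∧
    Filter.limsup (fun t => ‖u t‖^2) Filter.atTop ≤ ‖g‖^2 / δ^2 :=
  stmt_14_general ε δ σ hδ g u u' hu heq u₀ hu0
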